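/- arXiv:1908.08369 — 2 statements merged into one kernel-verified Lean document; each statement's English description precedes it below -/
import Mathlib

section
/- Let Ω ⊆ ℝ^N (N ≥ 2) be a bounded open set with smooth boundary, and let p, q : closure(Ω) → ℝ be continuous functions with 1 < p⁻ := min p ≤ p⁺ := max p < N and 1 ≤ q(x) < p*(x) := N p(x)/(N − p(x)) for all x ∈ closure(Ω). Then there exists a constant C > 0 such that for every smooth function u : ℝ^N → ℝ with compact support contained in Ω, the Luxemburg norms satisfy |u|_{q(·)} ≤ C ( |u|_{p(·)} + | |∇u| |_{p(·)} ), where |∇u|(x) denotes the Euclidean norm of the gradient of u at x. -/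
open MeasureTheory Real Set

/-- The Luxemburg norm of `u` on `Ω` with variable exponent `p`. -/
noncomputable def luxNorm {N : ℕ} (Ω : Set (Fin N → ℝ)) (p u : (Fin N → ℝ) → ℝ) : ℝ :=
  sInf {μ : ℝ | 0 < μ ∧ ∫ x in Ω, |u x / μ| ^ (p x) ≤ 1}

/-- `Ω` has smooth boundary: it is the sublevel set of a smooth function with
nonvanishing gradient on the boundary. -/
def HasSmoothBoundary {N : ℕ} (Ω : Set (Fin N → ℝ)) : Prop :=
  ∃ f : (Fin N → ℝ) → ℝ, ContDiff ℝ (⊤ : ℕ∞) f ∧ Ω = {x | f x < 0} ∧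
    ∀ x ∈ frontier Ω, fderiv ℝ f x ≠ 0

open scoped ENNReal NNReal Manifold ContDiff

section Aux
variable {N : ℕ} {Ω : Set (Fin N → ℝ)} {v w r : (Fin N → ℝ) → ℝ} {μ0 : ℝ}

lemma lux_nonneg (Ω : Set (Fin N → ℝ)) (r v : (Fin N → ℝ) → ℝ) : 0 ≤ luxNorm Ω r v :=
  Real.sInf_nonneg fun μ hμ => hμ.1.le

lemma lux_le (hμ0 : 0 < μ0) (h : ∫ x in Ω, |v x / μ0| ^ r x ≤ 1) : luxNorm Ω r v ≤ μ0 :=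
  csInf_le ⟨0, fun μ hμ => hμ.1.le⟩ ⟨hμ0, h⟩

lemma aux_int (hmeas : MeasurableSet Ω) (hfin : volume Ω ≠ ⊤)
    (hv : ContinuousOn v Ω) (hr : ContinuousOn r Ω)
    {Mv R : ℝ} (hMv : ∀ x ∈ Ω, |v x| ≤ Mv) (hr1 : ∀ x ∈ Ω, 1 ≤ r x) (hrR : ∀ x ∈ Ω, r x ≤ R)
    {μ : ℝ} (hμ : 0 < μ) :
    IntegrableOn (fun x => |v x / μ| ^ r x) Ω := by
  have hcont : ContinuousOn (fun x => |v x / μ| ^ r x) Ω := by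
    apply ContinuousOn.rpow ((hv.div_const μ).abs) hr
    intro x hx; exact Or.inr (lt_of_lt_of_le zero_lt_one (hr1 x hx))
  set T := max (Mv / μ) 1 with hT
  have hT1 : (1:ℝ) ≤ T := le_max_right _ _
  refine ⟨hcont.aestronglyMeasurable hmeas,
    HasFiniteIntegral.restrict_of_bounded (C := T ^ R) hfin.lt_top ?_⟩
  refine ae_restrict_of_forall_mem hmeas fun x hx => ?_
  have hb : |v x / μ| ≤ T := by
    rw [abs_div, abs_of_pos hμ]
    exact le_trans (by gcongr; exact hMv x hx) (le_max_left _ _)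
  have h0 : (0:ℝ) ≤ |v x / μ| := abs_nonneg _
  calc ‖|v x / μ| ^ r x‖ = |v x / μ| ^ r x := Real.norm_of_nonneg (Real.rpow_nonneg h0 _)
    _ ≤ T ^ r x := Real.rpow_le_rpow h0 hb (le_trans zero_le_one (hr1 x hx))
    _ ≤ T ^ R := Real.rpow_le_rpow_of_exponent_le hT1 (hrR x hx)

/-- The admissible set is nonempty, with an explicit member. -/
lemma aux_nonempty (hmeas : MeasurableSet Ω) (hfin : volume Ω ≠ ⊤)
    {Mv : ℝ} (hMv : ∀ x ∈ Ω, |v x| ≤ Mv) (hMv0 : 0 ≤ Mv) (hr1 : ∀ x ∈ Ω, 1 ≤ r x) :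
    ((Mv + 1) * ((volume Ω).toReal + 1)) ∈
      {μ : ℝ | 0 < μ ∧ ∫ x in Ω, |v x / μ| ^ r x ≤ 1} := by
  set V : ℝ := (volume Ω).toReal with hV
  have hV0 : 0 ≤ V := ENNReal.toReal_nonneg
  set μ0 : ℝ := (Mv + 1) * (V + 1) with hμ0def
  have hμ0 : 0 < μ0 := by positivity
  refine ⟨hμ0, ?_⟩
  have hpt : ∀ x ∈ Ω, |v x / μ0| ^ r x ≤ 1 / (V + 1) := by
    intro x hx
    have ht : |v x / μ0| ≤ 1 / (V + 1) := by
      rw [abs_div, abs_of_pos hμ0, hμ0def]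
      rw [div_le_div_iff₀ (by positivity) (by positivity)]
      calc |v x| * (V + 1) ≤ Mv * (V+1) := by gcongr; exact hMv x hx
        _ ≤ (Mv+1)*(V+1) := by nlinarith
        _ = 1 * ((Mv + 1) * (V + 1)) := (one_mul _).symm
      
    rcases eq_or_lt_of_le (abs_nonneg (v x / μ0)) with h0 | h0
    · rw [← h0, Real.zero_rpow (by linarith [hr1 x hx])]
      positivity
    · calc |v x / μ0| ^ r x ≤ |v x / μ0| ^ (1:ℝ) :=
          Real.rpow_le_rpow_of_exponent_ge h0 (le_trans ht (by rw [div_le_one (by positivity)]; linarith)) (hr1 x hx)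
        _ = |v x / μ0| := Real.rpow_one _
        _ ≤ 1 / (V+1) := ht
  calc ∫ x in Ω, |v x / μ0| ^ r x ≤ ∫ _x in Ω, 1 / (V + 1) := by
        apply integral_mono_of_nonneg
        · exact ae_restrict_of_forall_mem hmeas fun x _ => Real.rpow_nonneg (abs_nonneg _) _
        · exact integrableOn_const hfin
        · exact ae_restrict_of_forall_mem hmeas hpt
    _ = V * (1 / (V+1)) := by rw [setIntegral_const, smul_eq_mul]; rfl
    _ ≤ 1 := by rw [mul_one_div, div_le_one (by positivity)]; linarith

/-- modular at any `μ` above the Luxemburg norm is `≤ 1`. -/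
lemma aux_modular (hmeas : MeasurableSet Ω)
    (hint : ∀ μ : ℝ, 0 < μ → IntegrableOn (fun x => |v x / μ| ^ r x) Ω)
    (hne : {μ : ℝ | 0 < μ ∧ ∫ x in Ω, |v x / μ| ^ r x ≤ 1}.Nonempty)
    (hr1 : ∀ x ∈ Ω, 1 ≤ r x)
    {μ : ℝ} (hμ : luxNorm Ω r v < μ) :
    0 < μ ∧ ∫ x in Ω, |v x / μ| ^ r x ≤ 1 := by
  obtain ⟨μ', hμ'S, hlt⟩ := exists_lt_of_csInf_lt hne hμ
  have hμ'pos : 0 < μ' := hμ'S.1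
  have hμpos : 0 < μ := lt_trans hμ'pos hlt
  refine ⟨hμpos, ?_⟩
  have hpt : ∀ x ∈ Ω, |v x / μ| ^ r x ≤ |v x / μ'| ^ r x := by
    intro x hx
    apply Real.rpow_le_rpow (abs_nonneg _) _ (le_trans zero_le_one (hr1 x hx))
    rw [abs_div, abs_div, abs_of_pos hμpos, abs_of_pos hμ'pos]
    gcongr
  calc ∫ x in Ω, |v x / μ| ^ r x ≤ ∫ x in Ω, |v x / μ'| ^ r x := by
        apply integral_mono_of_nonneg
        · exact ae_restrict_of_forall_mem hmeas fun x _ => Real.rpow_nonneg (abs_nonneg _) _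
        · exact hint μ' hμ'pos
        · exact ae_restrict_of_forall_mem hmeas hpt
    _ ≤ 1 := hμ'S.2

lemma lux_congr (hmeas : MeasurableSet Ω) (h : ∀ x ∈ Ω, v x = w x) :
    luxNorm Ω r v = luxNorm Ω r w := by
  unfold luxNorm
  congr 1
  ext μ
  simp only [mem_setOf_eq, and_congr_right_iff]
  intro _
  rw [setIntegral_congr_fun hmeas (fun x hx => by rw [h x hx])]

end Aux

section Aux2
open MeasureTheory Real Set
variable {N : ℕ} {Ω : Set (Fin N → ℝ)} {v w r : (Fin N → ℝ) → ℝ}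

lemma lux_zero (hmeas : MeasurableSet Ω) (hr1 : ∀ x ∈ Ω, 1 ≤ r x) :
    luxNorm Ω r (fun _ => (0:ℝ)) = 0 := by
  have hm : ∀ μ : ℝ, 0 < μ → luxNorm Ω r (fun _ => (0:ℝ)) ≤ μ := by
    intro μ hμ
    apply lux_le hμ
    have : ∀ x ∈ Ω, |(0:ℝ) / μ| ^ r x = 0 := by
      intro x hx
      rw [zero_div, abs_zero, Real.zero_rpow (by linarith [hr1 x hx])]
    rw [setIntegral_congr_fun hmeas this, integral_zero]
    norm_num
  refine le_antisymm ?_ (lux_nonneg _ _ _)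
  exact le_of_forall_pos_le_add fun ε hε => by simpa using hm ε hε

lemma lux_add (hmeas : MeasurableSet Ω)
    (hr1 : ∀ x ∈ Ω, 1 ≤ r x)
    (hintv : ∀ μ : ℝ, 0 < μ → IntegrableOn (fun x => |v x / μ| ^ r x) Ω)
    (hintw : ∀ μ : ℝ, 0 < μ → IntegrableOn (fun x => |w x / μ| ^ r x) Ω)
    (hnev : {μ : ℝ | 0 < μ ∧ ∫ x in Ω, |v x / μ| ^ r x ≤ 1}.Nonempty)
    (hnew : {μ : ℝ | 0 < μ ∧ ∫ x in Ω, |w x / μ| ^ r x ≤ 1}.Nonempty) :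
    luxNorm Ω r (fun x => v x + w x) ≤ luxNorm Ω r v + luxNorm Ω r w := by
  apply le_of_forall_pos_le_add
  intro ε hε
  set μ : ℝ := luxNorm Ω r v + ε/2 with hμdef
  set μ' : ℝ := luxNorm Ω r w + ε/2 with hμ'def
  obtain ⟨hμpos, hmodv⟩ := aux_modular hmeas hintv hnev hr1 (μ := μ) (by simp [hμdef]; positivity)
  obtain ⟨hμ'pos, hmodw⟩ := aux_modular hmeas hintw hnew hr1 (μ := μ') (by simp [hμ'def]; positivity)
  have key : luxNorm Ω r (fun x => v x + w x) ≤ μ + μ' := by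
    set σ : ℝ := μ + μ' with hσdef
    have hσ : 0 < σ := by positivity
    apply lux_le hσ
    have hl : μ/σ + μ'/σ = 1 := by field_simp; exact hσdef.symm
    have hpt : ∀ x ∈ Ω, |(v x + w x) / σ| ^ r x ≤
        (μ/σ) * |v x / μ| ^ r x + (μ'/σ) * |w x / μ'| ^ r x := by
      intro x hx
      have h1 : |(v x + w x) / σ| ≤ (μ/σ) * |v x / μ| + (μ'/σ) * |w x / μ'| := by
        have e1 : (μ/σ) * |v x / μ| = |v x| / σ := by
          rw [abs_div, abs_of_pos hμpos]; field_simp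
        have e2 : (μ'/σ) * |w x / μ'| = |w x| / σ := by
          rw [abs_div, abs_of_pos hμ'pos]; field_simp
        rw [e1, e2, abs_div, abs_of_pos hσ, ← add_div]
        gcongr
        exact abs_add_le _ _
      have h2 : |(v x + w x) / σ| ^ r x ≤
          ((μ/σ) * |v x / μ| + (μ'/σ) * |w x / μ'|) ^ r x :=
        Real.rpow_le_rpow (abs_nonneg _) h1 (by linarith [hr1 x hx])
      refine h2.trans ?_
      have hcv := (convexOn_rpow (hr1 x hx)).2 (mem_Ici.2 (abs_nonneg (v x / μ)))
        (mem_Ici.2 (abs_nonneg (w x / μ'))) (by positivity) (by positivity) hl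
      simpa [smul_eq_mul] using hcv
    calc ∫ x in Ω, |(v x + w x) / σ| ^ r x
        ≤ ∫ x in Ω, ((μ/σ) * |v x / μ| ^ r x + (μ'/σ) * |w x / μ'| ^ r x) := by
          apply integral_mono_of_nonneg
          · exact ae_restrict_of_forall_mem hmeas fun x _ =>
              Real.rpow_nonneg (abs_nonneg _) _
          · exact ((hintv μ hμpos).const_mul _).add ((hintw μ' hμ'pos).const_mul _)
          · exact ae_restrict_of_forall_mem hmeas hpt
      _ = (μ/σ) * (∫ x in Ω, |v x / μ| ^ r x) + (μ'/σ) * (∫ x in Ω, |w x / μ'| ^ r x) := by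
          rw [integral_add ((hintv μ hμpos).const_mul _) ((hintw μ' hμ'pos).const_mul _),
            MeasureTheory.integral_const_mul, MeasureTheory.integral_const_mul]
      _ ≤ (μ/σ) * 1 + (μ'/σ) * 1 := by
          have g1 : 0 ≤ μ/σ := by positivity
          have g2 : 0 ≤ μ'/σ := by positivity
          exact add_le_add (mul_le_mul_of_nonneg_left hmodv g1)
            (mul_le_mul_of_nonneg_left hmodw g2)
      _ = 1 := by rw [mul_one, mul_one, hl]
  calc luxNorm Ω r (fun x => v x + w x) ≤ μ + μ' := key
    _ = luxNorm Ω r v + luxNorm Ω r w + ε := by rw [hμdef, hμ'def]; ring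

end Aux2

section Sob
open MeasureTheory Real Set
open scoped ENNReal NNReal

lemma sobolev_real {N : ℕ} (hN : 2 ≤ N) {a A : ℝ} (ha1 : 1 < a) (haN : a < N)
    (hA : A = N * a / (N - a)) :
    ∃ C : ℝ, 0 ≤ C ∧ ∀ v : (Fin N → ℝ) → ℝ, ContDiff ℝ 1 v → HasCompactSupport v →
      (∫ x : Fin N → ℝ, |v x| ^ A) ^ A⁻¹ ≤ C * (∫ x : Fin N → ℝ, ‖fderiv ℝ v x‖ ^ a) ^ a⁻¹ := by
  have hNR : (2:ℝ) ≤ (N:ℝ) := by exact_mod_cast hN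
  have ha0 : 0 < a := lt_trans zero_lt_one ha1
  have hNa : 0 < (N:ℝ) - a := by linarith
  have hApos : 0 < A := by rw [hA]; positivity
  have hA1 : 1 < A := by
    rw [hA, lt_div_iff₀ hNa]; nlinarith
  set pn : ℝ≥0 := a.toNNReal with hpn
  set pn' : ℝ≥0 := A.toNNReal with hpn'
  have hpncoe : (pn : ℝ) = a := Real.coe_toNNReal a ha0.le
  have hpn'coe : (pn' : ℝ) = A := Real.coe_toNNReal A hApos.le
  have hfr : Module.finrank ℝ (Fin N → ℝ) = N := Module.finrank_fin_fun ℝ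
  have hp1 : 1 ≤ pn := by
    rw [← NNReal.coe_le_coe, hpncoe]; norm_num; exact ha1.le
  have hfr0 : 0 < Module.finrank ℝ (Fin N → ℝ) := by rw [hfr]; omega
  have hp' : (pn' : ℝ)⁻¹ = (pn : ℝ)⁻¹ - (Module.finrank ℝ (Fin N → ℝ) : ℝ)⁻¹ := by
    rw [hpncoe, hpn'coe, hfr, hA]
    rw [inv_div]
    field_simp
  set Cnn := SNormLESNormFDerivOfEqConst (F := ℝ) (volume : Measure (Fin N → ℝ)) pn with hCnn
  refine ⟨Cnn, Cnn.coe_nonneg, fun v hv h2v => ?_⟩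
  have hsob := eLpNorm_le_eLpNorm_fderiv_of_eq (F := ℝ) (volume : Measure (Fin N → ℝ))
    hv h2v hp1 hfr0 hp'
  have hpn'0 : ((pn' : ℝ≥0∞)) ≠ 0 := by
    simp only [ne_eq, ENNReal.coe_eq_zero]
    intro h; rw [h] at hpn'coe; simp at hpn'coe; linarith
  have hpn0 : ((pn : ℝ≥0∞)) ≠ 0 := by
    simp only [ne_eq, ENNReal.coe_eq_zero]
    intro h; rw [h] at hpncoe; simp at hpncoe; linarith
  have hmv : MemLp v pn' volume := hv.continuous.memLp_of_hasCompactSupport h2v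
  have hmd : MemLp (fderiv ℝ v) pn volume :=
    (hv.continuous_fderiv one_ne_zero).memLp_of_hasCompactSupport (h2v.fderiv (𝕜 := ℝ))
  rw [hmv.eLpNorm_eq_integral_rpow_norm hpn'0 ENNReal.coe_ne_top,
    hmd.eLpNorm_eq_integral_rpow_norm hpn0 ENNReal.coe_ne_top] at hsob
  have htrA : (pn' : ℝ≥0∞).toReal = A := by rw [ENNReal.coe_toReal, hpn'coe]
  have htra : (pn : ℝ≥0∞).toReal = a := by rw [ENNReal.coe_toReal, hpncoe]
  rw [htrA, htra] at hsob
  have hJ : (0:ℝ) ≤ (∫ x : Fin N → ℝ, ‖fderiv ℝ v x‖ ^ a) ^ a⁻¹ := by positivity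
  have hI : (0:ℝ) ≤ (∫ x : Fin N → ℝ, ‖v x‖ ^ A) ^ A⁻¹ := by positivity
  have := ENNReal.toReal_mono (by
      exact ENNReal.mul_ne_top ENNReal.coe_ne_top ENNReal.ofReal_ne_top) hsob
  rw [ENNReal.toReal_ofReal hI, ENNReal.toReal_mul, ENNReal.coe_toReal,
    ENNReal.toReal_ofReal hJ] at this
  calc (∫ x : Fin N → ℝ, |v x| ^ A) ^ A⁻¹
      = (∫ x : Fin N → ℝ, ‖v x‖ ^ A) ^ A⁻¹ := by
        simp only [Real.norm_eq_abs]
    _ ≤ Cnn * (∫ x : Fin N → ℝ, ‖fderiv ℝ v x‖ ^ a) ^ a⁻¹ := this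

end Sob

section Aux3
open MeasureTheory Real Set
variable {N : ℕ} {Ω : Set (Fin N → ℝ)}

lemma lux_q_le (hmeas : MeasurableSet Ω) (hfin : volume Ω ≠ ⊤)
    {v q : (Fin N → ℝ) → ℝ} {A : ℝ} (hA1 : 1 ≤ A)
    (hq1 : ∀ x ∈ Ω, 1 ≤ q x)
    (hqA : ∀ x ∈ Ω, v x ≠ 0 → q x ≤ A)
    {c : ℝ} (hc : 0 < c)
    (hintA : IntegrableOn (fun x => |v x / c| ^ A) Ω)
    (hmod : ∫ x in Ω, |v x / c| ^ A ≤ 1) :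
    luxNorm Ω q v ≤ ((volume Ω).toReal + 1) * c := by
  set V : ℝ := (volume Ω).toReal with hV
  have hV0 : 0 ≤ V := ENNReal.toReal_nonneg
  apply lux_le (by positivity)
  have hpt : ∀ x ∈ Ω, |v x / ((V + 1) * c)| ^ q x ≤ (1 + |v x / c| ^ A) / (V + 1) := by
    intro x hx
    rcases eq_or_ne (v x) 0 with h0 | h0
    · rw [h0, zero_div, abs_zero, Real.zero_rpow (by linarith [hq1 x hx])]
      positivity
    · have habs : |v x / ((V + 1) * c)| = |v x / c| / (V + 1) := by
        rw [abs_div, abs_div, abs_of_pos (show (0:ℝ) < (V+1)*c by positivity),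
          abs_of_pos hc]
        rw [div_div]; ring_nf
      set t : ℝ := |v x / c| with ht
      have ht0 : 0 < t := by
        rw [ht, abs_pos]
        exact div_ne_zero h0 hc.ne'
      rw [habs, Real.div_rpow ht0.le (by positivity)]
      have hnum : t ^ q x ≤ 1 + t ^ A := by
        rcases le_or_gt t 1 with h1 | h1
        · have : t ^ q x ≤ 1 := Real.rpow_le_one ht0.le h1 (by linarith [hq1 x hx])
          have h2 : 0 ≤ t ^ A := Real.rpow_nonneg ht0.le _
          linarith
        · have : t ^ q x ≤ t ^ A :=
            Real.rpow_le_rpow_of_exponent_le h1.le (hqA x hx h0)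
          have h2 : (0:ℝ) ≤ 1 := zero_le_one
          linarith
      have hden : (V + 1) ≤ (V + 1) ^ q x := by
        calc (V + 1) = (V + 1) ^ (1:ℝ) := (Real.rpow_one _).symm
          _ ≤ (V + 1) ^ q x :=
            Real.rpow_le_rpow_of_exponent_le (by linarith) (hq1 x hx)
      exact div_le_div₀ (by positivity) hnum (by positivity) hden
  calc ∫ x in Ω, |v x / ((V + 1) * c)| ^ q x
      ≤ ∫ x in Ω, (1 + |v x / c| ^ A) / (V + 1) := by
        apply integral_mono_of_nonneg
        · exact ae_restrict_of_forall_mem hmeas fun x _ =>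
            Real.rpow_nonneg (abs_nonneg _) _
        · exact (((integrableOn_const hfin).add hintA).div_const _)
        · exact ae_restrict_of_forall_mem hmeas hpt
    _ = (V + ∫ x in Ω, |v x / c| ^ A) / (V + 1) := by
        rw [integral_div, integral_add (μ := volume.restrict Ω) (integrableOn_const hfin : IntegrableOn (fun _ => (1:ℝ)) Ω volume) hintA,
          setIntegral_const, smul_eq_mul, mul_one]; rfl
    _ ≤ (V + 1) / (V + 1) := by
        apply div_le_div_of_nonneg_right ?_ (by positivity)
        linarith
    _ = 1 := div_self (by positivity)

lemma const_exp_bound (hfin : volume Ω ≠ ⊤)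
    {s : Set (Fin N → ℝ)} (hs : MeasurableSet s) (hsub : s ⊆ Ω)
    {g r : (Fin N → ℝ) → ℝ} {aexp μ : ℝ}
    (ha1 : 1 ≤ aexp) (har : ∀ x ∈ s, aexp ≤ r x)
    (hμ : 0 < μ)
    (hintp : IntegrableOn (fun x => |g x / μ| ^ r x) Ω)
    (hmod : ∫ x in Ω, |g x / μ| ^ r x ≤ 1) :
    ∫ x in s, |g x / μ| ^ aexp ≤ (volume Ω).toReal + 1 := by
  have hpt : ∀ x ∈ s, |g x / μ| ^ aexp ≤ 1 + |g x / μ| ^ r x := by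
    intro x hx
    have ht0 : 0 ≤ |g x / μ| := abs_nonneg _
    rcases le_or_gt (|g x / μ|) 1 with h1 | h1
    · have : |g x / μ| ^ aexp ≤ 1 := Real.rpow_le_one ht0 h1 (by linarith)
      have h2 : 0 ≤ |g x / μ| ^ r x := Real.rpow_nonneg ht0 _
      linarith
    · have : |g x / μ| ^ aexp ≤ |g x / μ| ^ r x :=
        Real.rpow_le_rpow_of_exponent_le h1.le (har x hx)
      linarith
  calc ∫ x in s, |g x / μ| ^ aexp
      ≤ ∫ x in s, (1 + |g x / μ| ^ r x) := by
        apply integral_mono_of_nonneg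
        · exact ae_restrict_of_forall_mem hs fun x _ =>
            Real.rpow_nonneg (abs_nonneg _) _
        · exact (integrableOn_const ((measure_mono hsub).trans_lt hfin.lt_top).ne).add
            (hintp.mono_set hsub)
        · exact ae_restrict_of_forall_mem hs hpt
    _ = (volume s).toReal + ∫ x in s, |g x / μ| ^ r x := by
        rw [integral_add (μ := volume.restrict s) (integrableOn_const
          ((measure_mono hsub).trans_lt hfin.lt_top).ne : IntegrableOn (fun _ => (1:ℝ)) s volume) (hintp.mono_set hsub),
          setIntegral_const, smul_eq_mul, mul_one]; rfl
    _ ≤ (volume Ω).toReal + ∫ x in Ω, |g x / μ| ^ r x := by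
        apply add_le_add
        · exact ENNReal.toReal_mono hfin (measure_mono hsub)
        · apply setIntegral_mono_set hintp
          · exact Filter.Eventually.of_forall fun x => Real.rpow_nonneg (abs_nonneg _) _
          · exact hsub.eventuallyLE
    _ ≤ (volume Ω).toReal + 1 := by linarith

end Aux3

section Piece
open MeasureTheory Real Set

set_option maxHeartbeats 2000000 in
lemma per_piece {N : ℕ} (hN : 2 ≤ N) {Ω : Set (Fin N → ℝ)} (hmeas : MeasurableSet Ω)
    (hfin : volume Ω ≠ ⊤)
    {p q u g1 φ : (Fin N → ℝ) → ℝ} {a Csi Mbi μ μ' δ : ℝ}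
    (hg1def : g1 = fun x => ‖fderiv ℝ u x‖)
    (hu1 : ContDiff ℝ 1 u) (hu2 : HasCompactSupport u) (hsupp : tsupport u ⊆ Ω)
    (hg1c : Continuous g1)
    (hφ1c : ContDiff ℝ 1 φ) (hφ0 : ∀ x, 0 ≤ φ x) (hφ1 : ∀ x, φ x ≤ 1)
    {Vz : Set (Fin N → ℝ)} (hVzo : IsOpen Vz) (hφsupp : tsupport φ ⊆ Vz)
    (ha1 : 1 < a) (haN : a < N)
    (hloc : ∀ y ∈ Ω ∩ Vz, a ≤ p y ∧ q y ≤ N * a / (N - a))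
    (hq1 : ∀ x ∈ Ω, 1 ≤ q x)
    (hCs0 : 0 ≤ Csi)
    (hCs : ∀ v : (Fin N → ℝ) → ℝ, ContDiff ℝ 1 v → HasCompactSupport v →
      (∫ x : Fin N → ℝ, |v x| ^ (N * a / (N - a))) ^ (N * a / (N - a))⁻¹ ≤
        Csi * (∫ x : Fin N → ℝ, ‖fderiv ℝ v x‖ ^ a) ^ a⁻¹)
    (hMb : ∀ x ∈ Ω, ‖fderiv ℝ φ x‖ ≤ Mbi) (hMb0 : 0 ≤ Mbi)
    (hμpos : 0 < μ) (hμ'pos : 0 < μ')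
    (hmodu : ∫ x in Ω, |u x / μ'| ^ p x ≤ 1)
    (hmodd : ∫ x in Ω, |g1 x / μ| ^ p x ≤ 1)
    (hIp : ∀ v : (Fin N → ℝ) → ℝ, Continuous v → ∀ ν : ℝ, 0 < ν →
      IntegrableOn (fun x => |v x / ν| ^ p x) Ω)
    (hIC : ∀ h : (Fin N → ℝ) → ℝ, Continuous h → IntegrableOn h Ω)
    (hδ : 0 < δ) :
    luxNorm Ω q (fun y => u y * φ y) ≤
      ((volume Ω).toReal + 1) *
        (Csi * ((2*(1+Mbi)*(μ + μ')) * ((volume Ω).toReal + 1)) + δ) := by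
  set V : ℝ := (volume Ω).toReal with hVdef
  have hV0 : 0 ≤ V := ENNReal.toReal_nonneg
  have hNR : (2:ℝ) ≤ (N:ℝ) := by exact_mod_cast hN
  have hNa : (0:ℝ) < N - a := by linarith
  have ha0 : (0:ℝ) < a := by linarith
  set Aex : ℝ := N * a / (N - a) with hAexdef
  have hAex1 : 1 ≤ Aex := by rw [hAexdef, le_div_iff₀ hNa]; nlinarith
  have hAexpos : 0 < Aex := by linarith
  set τ : ℝ := 2*(1+Mbi)*(μ + μ') with hτdef
  have hτpos : 0 < τ := by positivity
  set vi : (Fin N → ℝ) → ℝ := fun y => u y * φ y with hvidef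
  have hvi1 : ContDiff ℝ 1 vi := hu1.mul hφ1c
  have hvicpt : HasCompactSupport vi := hu2.mul_right
  have hviΩ : tsupport vi ⊆ Ω := le_trans tsupport_mul_subset_left hsupp
  have hviV : tsupport vi ⊆ Vz := le_trans tsupport_mul_subset_right hφsupp
  set si : Set (Fin N → ℝ) := Ω ∩ Vz with hsidef
  have hsimeas : MeasurableSet si := hmeas.inter hVzo.measurableSet
  have hsiΩ : si ⊆ Ω := inter_subset_left
  have hvicon : Continuous vi := hu1.continuous.mul hφ1c.continuous
  have hg1nn : ∀ x, 0 ≤ g1 x := by intro x; rw [hg1def]; exact norm_nonneg _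
  -- pointwise gradient bound
  have hgrad : ∀ x ∈ Ω, ‖fderiv ℝ vi x‖ ≤ g1 x + Mbi * |u x| := by
    intro x hx
    have hdu : DifferentiableAt ℝ u x := hu1.differentiable one_ne_zero x
    have hdφ : DifferentiableAt ℝ φ x := hφ1c.differentiable one_ne_zero x
    have : fderiv ℝ vi x = u x • fderiv ℝ φ x + φ x • fderiv ℝ u x := fderiv_mul hdu hdφ
    rw [this]
    calc ‖u x • fderiv ℝ φ x + φ x • fderiv ℝ u x‖
        ≤ ‖u x • fderiv ℝ φ x‖ + ‖φ x • fderiv ℝ u x‖ := norm_add_le _ _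
      _ = |u x| * ‖fderiv ℝ φ x‖ + |φ x| * ‖fderiv ℝ u x‖ := by
          rw [norm_smul, norm_smul, Real.norm_eq_abs, Real.norm_eq_abs]
      _ ≤ |u x| * Mbi + 1 * ‖fderiv ℝ u x‖ := by
          gcongr
          · exact hMb x hx
          · rw [abs_of_nonneg (hφ0 x)]; exact hφ1 x
      _ = g1 x + Mbi * |u x| := by rw [hg1def]; ring
  -- modular bounds on si
  have hI1 : ∫ x in si, |g1 x / μ| ^ a ≤ V + 1 :=
    const_exp_bound hfin hsimeas hsiΩ ha1.le (fun y hy => (hloc y hy).1) hμpos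
      (hIp g1 hg1c μ hμpos) hmodd
  have hI2 : ∫ x in si, |u x / μ'| ^ a ≤ V + 1 :=
    const_exp_bound hfin hsimeas hsiΩ ha1.le (fun y hy => (hloc y hy).1) hμ'pos
      (hIp u hu1.continuous μ' hμ'pos) hmodu
  have hIg1 : IntegrableOn (fun x => |g1 x / μ| ^ a) Ω :=
    hIC _ (((hg1c.div_const μ).abs).rpow_const (fun x => Or.inr ha0.le))
  have hIu1 : IntegrableOn (fun x => |u x / μ'| ^ a) Ω :=
    hIC _ (((hu1.continuous.div_const μ').abs).rpow_const (fun x => Or.inr ha0.le))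
  have hI3 : ∫ x in si, (‖fderiv ℝ vi x‖ / τ) ^ a ≤ V + 1 := by
    have hpt : ∀ x ∈ si, (‖fderiv ℝ vi x‖ / τ) ^ a ≤
        (1/2) * |g1 x / μ| ^ a + (1/2) * |u x / μ'| ^ a := by
      intro x hx
      have hxΩ : x ∈ Ω := hsiΩ hx
      have e1 : |g1 x / μ| = g1 x / μ := by
        rw [abs_div, abs_of_pos hμpos, abs_of_nonneg (hg1nn x)]
      have e2 : |u x / μ'| = |u x| / μ' := by rw [abs_div, abs_of_pos hμ'pos]
      have h0 : ‖fderiv ℝ vi x‖ / τ ≤ (1/2) * |g1 x / μ| + (1/2) * |u x / μ'| := by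
        rw [e1, e2]
        have step1 : ‖fderiv ℝ vi x‖ / τ ≤ ((1+Mbi) * (g1 x + |u x|)) / τ := by
          gcongr
          calc ‖fderiv ℝ vi x‖ ≤ g1 x + Mbi * |u x| := hgrad x hxΩ
            _ ≤ (1+Mbi) * (g1 x + |u x|) := by nlinarith [abs_nonneg (u x), hg1nn x, hMb0]
        have step2 : ((1+Mbi) * (g1 x + |u x|)) / τ = (g1 x + |u x|) / (2*(μ+μ')) := by
          rw [hτdef, div_eq_div_iff (by positivity) (by positivity)]; ring
        have b1 : g1 x / (μ+μ') ≤ g1 x / μ := by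
          apply div_le_div_of_nonneg_left (hg1nn x) hμpos; linarith
        have b2 : |u x| / (μ+μ') ≤ |u x| / μ' := by
          apply div_le_div_of_nonneg_left (abs_nonneg _) hμ'pos; linarith
        have step3 : (g1 x + |u x|) / (2*(μ+μ')) ≤ (1/2) * (g1 x / μ) + (1/2) * (|u x| / μ') := by
          calc (g1 x + |u x|) / (2*(μ+μ'))
              = (1/2) * (g1 x/(μ+μ') + |u x|/(μ+μ')) := by
                have h2 : (0:ℝ) < μ + μ' := by linarith
                rw [← add_div]
                field_simp
            _ ≤ (1/2) * (g1 x / μ + |u x| / μ') := by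
                apply mul_le_mul_of_nonneg_left (add_le_add b1 b2) (by norm_num)
            _ = (1/2)*(g1 x/μ) + (1/2)*(|u x|/μ') := by ring
        rw [step2] at step1
        linarith [step3]
      have h1 : (‖fderiv ℝ vi x‖/τ)^a ≤ ((1/2)*|g1 x/μ| + (1/2)*|u x/μ'|)^a :=
        Real.rpow_le_rpow (by positivity) h0 ha0.le
      refine h1.trans ?_
      have hcv := (convexOn_rpow ha1.le).2 (mem_Ici.2 (abs_nonneg (g1 x/μ)))
        (mem_Ici.2 (abs_nonneg (u x/μ'))) (by norm_num : (0:ℝ) ≤ 1/2)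
        (by norm_num : (0:ℝ) ≤ 1/2) (by norm_num : (1:ℝ)/2 + 1/2 = 1)
      simpa [smul_eq_mul] using hcv
    calc ∫ x in si, (‖fderiv ℝ vi x‖ / τ) ^ a
        ≤ ∫ x in si, ((1/2) * |g1 x / μ| ^ a + (1/2) * |u x / μ'| ^ a) := by
          apply integral_mono_of_nonneg
          · exact ae_restrict_of_forall_mem hsimeas fun x _ =>
              Real.rpow_nonneg (by positivity) _
          · exact ((hIg1.mono_set hsiΩ).const_mul _).add ((hIu1.mono_set hsiΩ).const_mul _)
          · exact ae_restrict_of_forall_mem hsimeas hpt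
      _ = (1/2) * (∫ x in si, |g1 x / μ| ^ a) + (1/2) * (∫ x in si, |u x / μ'| ^ a) := by
          rw [integral_add ((hIg1.mono_set hsiΩ).const_mul _) ((hIu1.mono_set hsiΩ).const_mul _),
            MeasureTheory.integral_const_mul, MeasureTheory.integral_const_mul]
      _ ≤ (1/2) * (V+1) + (1/2) * (V+1) :=
          add_le_add (mul_le_mul_of_nonneg_left hI1 (by norm_num))
            (mul_le_mul_of_nonneg_left hI2 (by norm_num))
      _ = V + 1 := by ring
  have hglobal : (∫ x : Fin N → ℝ, ‖fderiv ℝ vi x‖ ^ a) = ∫ x in si, ‖fderiv ℝ vi x‖ ^ a := by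
    refine (setIntegral_eq_integral_of_forall_compl_eq_zero fun x hx => ?_).symm
    have hxn : x ∉ tsupport vi := fun hmem => hx ⟨hviΩ hmem, hviV hmem⟩
    have hz : fderiv ℝ vi x = 0 := by
      by_contra h
      exact hxn (support_fderiv_subset ℝ (Function.mem_support.2 h))
    rw [hz, norm_zero, Real.zero_rpow (by linarith)]
  have hτa : ∫ x in si, ‖fderiv ℝ vi x‖ ^ a ≤ τ^a * (V + 1) := by
    have heq : ∀ x ∈ si, ‖fderiv ℝ vi x‖ ^ a = τ^a * (‖fderiv ℝ vi x‖ / τ) ^ a := by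
      intro x _
      rw [Real.div_rpow (norm_nonneg _) hτpos.le, mul_div_cancel₀]
      exact (Real.rpow_pos_of_pos hτpos a).ne'
    rw [setIntegral_congr_fun hsimeas heq, MeasureTheory.integral_const_mul]
    exact mul_le_mul_of_nonneg_left hI3 (Real.rpow_nonneg hτpos.le a)
  have haInv1 : a⁻¹ ≤ 1 := by
    rw [inv_le_one_iff₀]; right; exact ha1.le
  have hJ : (∫ x : Fin N → ℝ, ‖fderiv ℝ vi x‖ ^ a) ^ a⁻¹ ≤ τ * (V + 1) := by
    have h0 : (0:ℝ) ≤ ∫ x : Fin N → ℝ, ‖fderiv ℝ vi x‖ ^ a :=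
      integral_nonneg fun x => Real.rpow_nonneg (norm_nonneg _) _
    have hb : (∫ x : Fin N → ℝ, ‖fderiv ℝ vi x‖ ^ a) ≤ τ^a * (V+1) := by
      rw [hglobal]; exact hτa
    calc (∫ x : Fin N → ℝ, ‖fderiv ℝ vi x‖ ^ a) ^ a⁻¹ ≤ (τ^a * (V+1)) ^ a⁻¹ :=
          Real.rpow_le_rpow h0 hb (inv_nonneg.2 ha0.le)
      _ = τ * (V+1) ^ a⁻¹ := by
          rw [Real.mul_rpow (Real.rpow_nonneg hτpos.le a) (by linarith),
            ← Real.rpow_mul hτpos.le, mul_inv_cancel₀ ha0.ne', Real.rpow_one]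
      _ ≤ τ * (V+1) := by
          apply mul_le_mul_of_nonneg_left _ hτpos.le
          calc (V+1) ^ a⁻¹ ≤ (V+1) ^ (1:ℝ) :=
                Real.rpow_le_rpow_of_exponent_le (by linarith) haInv1
            _ = V+1 := Real.rpow_one _
  have hsb := hCs vi hvi1 hvicpt
  set Ni : ℝ := (∫ x : Fin N → ℝ, |vi x| ^ Aex) ^ Aex⁻¹ with hNidef
  have hIA0 : (0:ℝ) ≤ ∫ x : Fin N → ℝ, |vi x| ^ Aex :=
    integral_nonneg fun x => Real.rpow_nonneg (abs_nonneg _) _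
  have hNi0 : 0 ≤ Ni := Real.rpow_nonneg hIA0 _
  have hNile : Ni ≤ Csi * (τ * (V+1)) :=
    le_trans hsb (mul_le_mul_of_nonneg_left hJ hCs0)
  set c : ℝ := Ni + δ with hcdef
  have hcpos : 0 < c := add_pos_of_nonneg_of_pos hNi0 hδ
  have hIAint : Integrable (fun x : Fin N → ℝ => |vi x| ^ Aex) := by
    apply Continuous.integrable_of_hasCompactSupport
    · exact (hvicon.abs).rpow_const (fun x => Or.inr hAexpos.le)
    · apply HasCompactSupport.comp_left (g := fun r : ℝ => |r| ^ Aex) hvicpt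
      rw [abs_zero, Real.zero_rpow hAexpos.ne']
  have hmodvi : ∫ x in Ω, |vi x / c| ^ Aex ≤ 1 := by
    have heq : ∀ x ∈ Ω, |vi x / c| ^ Aex = |vi x| ^ Aex / c ^ Aex := by
      intro x _
      rw [abs_div, abs_of_pos hcpos, Real.div_rpow (abs_nonneg _) hcpos.le]
    rw [setIntegral_congr_fun hmeas heq, integral_div,
      div_le_one (Real.rpow_pos_of_pos hcpos _)]
    calc ∫ x in Ω, |vi x| ^ Aex ≤ ∫ x : Fin N → ℝ, |vi x| ^ Aex :=
          setIntegral_le_integral hIAint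
            (Filter.Eventually.of_forall fun x => Real.rpow_nonneg (abs_nonneg _) _)
      _ = Ni ^ Aex := by
          rw [hNidef, ← Real.rpow_mul hIA0, inv_mul_cancel₀ hAexpos.ne', Real.rpow_one]
      _ ≤ c ^ Aex := Real.rpow_le_rpow hNi0 (by rw [hcdef]; linarith) hAexpos.le
  have hqA : ∀ x ∈ Ω, vi x ≠ 0 → q x ≤ Aex := by
    intro x hx hne
    have hts : x ∈ tsupport vi := subset_closure (Function.mem_support.2 hne)
    exact (hloc x ⟨hx, hviV hts⟩).2
  have hintA : IntegrableOn (fun x => |vi x / c| ^ Aex) Ω :=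
    hIC _ (((hvicon.div_const c).abs).rpow_const (fun x => Or.inr hAexpos.le))
  have hfinal := lux_q_le hmeas hfin hAex1 hq1 hqA hcpos hintA hmodvi
  calc luxNorm Ω q vi ≤ (V+1) * c := hfinal
    _ ≤ (V+1) * (Csi * (τ * (V+1)) + δ) := by
        apply mul_le_mul_of_nonneg_left _ (by linarith)
        rw [hcdef]; linarith

end Piece

set_option maxHeartbeats 1000000 in
/-- Sobolev embedding `W^{1,p(x)}(Ω) ↪ L^{q(x)}(Ω)` on test functions. -/
theorem sobolev_embedding_variable_exponent {N : ℕ} (hN : 2 ≤ N)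
    (Ω : Set (Fin N → ℝ)) (hΩo : IsOpen Ω) (hΩb : Bornology.IsBounded Ω)
    (hΩs : HasSmoothBoundary Ω)
    (p q : (Fin N → ℝ) → ℝ)
    (hpc : ContinuousOn p (closure Ω)) (hqc : ContinuousOn q (closure Ω))
    (hpm : 1 < sInf (p '' closure Ω)) (hpM : sSup (p '' closure Ω) < N)
    (hq : ∀ x ∈ closure Ω, 1 ≤ q x ∧ q x < N * p x / (N - p x)) :
    ∃ C > (0 : ℝ), ∀ u : (Fin N → ℝ) → ℝ, ContDiff ℝ (⊤ : ℕ∞) u → HasCompactSupport u →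
      tsupport u ⊆ Ω →
      luxNorm Ω q u ≤ C * (luxNorm Ω p u + luxNorm Ω p (fun x => ‖fderiv ℝ u x‖)) := by
  classical
  rcases eq_empty_or_nonempty Ω with hemp | hne
  · exfalso
    rw [hemp] at hpm
    simp [Real.sInf_empty] at hpm
    linarith
  set K := closure Ω with hKdef
  have hKc : IsCompact K := hΩb.isCompact_closure
  have hmeas : MeasurableSet Ω := hΩo.measurableSet
  have hΩK : Ω ⊆ K := subset_closure
  have hfin : volume Ω ≠ ⊤ :=
    ((measure_mono hΩK).trans_lt hKc.measure_lt_top).ne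
  set V : ℝ := (volume Ω).toReal with hVdef
  have hV0 : 0 ≤ V := ENNReal.toReal_nonneg
  have hNR : (2:ℝ) ≤ (N:ℝ) := by exact_mod_cast hN
  -- pointwise exponent bounds
  have hp1 : ∀ x ∈ K, 1 < p x := fun x hx =>
    lt_of_lt_of_le hpm (csInf_le (hKc.image_of_continuousOn hpc).bddBelow ⟨x, hx, rfl⟩)
  have hpN : ∀ x ∈ K, p x < N := fun x hx =>
    lt_of_le_of_lt (le_csSup (hKc.image_of_continuousOn hpc).bddAbove ⟨x, hx, rfl⟩) hpM
  have hq1 : ∀ x ∈ Ω, 1 ≤ q x := fun x hx => (hq x (hΩK hx)).1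
  have hp1Ω : ∀ x ∈ Ω, 1 ≤ p x := fun x hx => (hp1 x (hΩK hx)).le
  -- bounds for continuous functions
  have hbdd : ∀ v : (Fin N → ℝ) → ℝ, Continuous v → ∃ Mv : ℝ, 0 ≤ Mv ∧ ∀ x ∈ Ω, |v x| ≤ Mv := by
    intro v hv
    obtain ⟨Mv, hMv⟩ := hKc.exists_bound_of_continuousOn hv.continuousOn
    refine ⟨max Mv 0, le_max_right _ _, fun x hx => ?_⟩
    exact le_trans (by simpa [Real.norm_eq_abs] using hMv x (hΩK hx)) (le_max_left _ _)
  obtain ⟨Rq, hRq1, hRq⟩ : ∃ R : ℝ, 1 ≤ R ∧ ∀ x ∈ Ω, q x ≤ R := by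
    obtain ⟨R, hR⟩ := hKc.exists_bound_of_continuousOn hqc
    exact ⟨max R 1, le_max_right _ _, fun x hx =>
      le_trans (le_trans (le_abs_self _) (by simpa [Real.norm_eq_abs] using hR x (hΩK hx)))
        (le_max_left _ _)⟩
  obtain ⟨Rp, hRp1, hRp⟩ : ∃ R : ℝ, 1 ≤ R ∧ ∀ x ∈ Ω, p x ≤ R := by
    obtain ⟨R, hR⟩ := hKc.exists_bound_of_continuousOn hpc
    exact ⟨max R 1, le_max_right _ _, fun x hx =>
      le_trans (le_trans (le_abs_self _) (by simpa [Real.norm_eq_abs] using hR x (hΩK hx)))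
        (le_max_left _ _)⟩
  have hqco : ContinuousOn q Ω := hqc.mono hΩK
  have hpco : ContinuousOn p Ω := hpc.mono hΩK
  -- integrability / nonemptiness for continuous functions
  have hIq : ∀ v : (Fin N → ℝ) → ℝ, Continuous v → ∀ μ : ℝ, 0 < μ →
      IntegrableOn (fun x => |v x / μ| ^ q x) Ω := by
    intro v hv μ hμ
    obtain ⟨Mv, _, hMv⟩ := hbdd v hv
    exact aux_int hmeas hfin hv.continuousOn hqco hMv hq1 hRq hμ
  have hIp : ∀ v : (Fin N → ℝ) → ℝ, Continuous v → ∀ μ : ℝ, 0 < μ →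
      IntegrableOn (fun x => |v x / μ| ^ p x) Ω := by
    intro v hv μ hμ
    obtain ⟨Mv, _, hMv⟩ := hbdd v hv
    exact aux_int hmeas hfin hv.continuousOn hpco hMv hp1Ω hRp hμ
  have hSq : ∀ v : (Fin N → ℝ) → ℝ, Continuous v →
      {μ : ℝ | 0 < μ ∧ ∫ x in Ω, |v x / μ| ^ q x ≤ 1}.Nonempty := by
    intro v hv
    obtain ⟨Mv, hMv0, hMv⟩ := hbdd v hv
    exact ⟨_, aux_nonempty hmeas hfin hMv hMv0 hq1⟩
  have hSp : ∀ v : (Fin N → ℝ) → ℝ, Continuous v →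
      {μ : ℝ | 0 < μ ∧ ∫ x in Ω, |v x / μ| ^ p x ≤ 1}.Nonempty := by
    intro v hv
    obtain ⟨Mv, hMv0, hMv⟩ := hbdd v hv
    exact ⟨_, aux_nonempty hmeas hfin hMv hMv0 hp1Ω⟩
  have hIC : ∀ h : (Fin N → ℝ) → ℝ, Continuous h → IntegrableOn h Ω := fun h hh =>
    (hh.continuousOn.integrableOn_compact hKc).mono_set hΩK
  -- triangle inequality for finite sums
  have hadd : ∀ v w : (Fin N → ℝ) → ℝ, Continuous v → Continuous w →
      luxNorm Ω q (fun x => v x + w x) ≤ luxNorm Ω q v + luxNorm Ω q w := fun v w hv hw =>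
    lux_add hmeas hq1 (hIq v hv) (hIq w hw) (hSq v hv) (hSq w hw)
  have hsumlem : ∀ {ι : Type} (s : Finset ι) (v : ι → (Fin N → ℝ) → ℝ),
      (∀ i, Continuous (v i)) →
      luxNorm Ω q (fun x => ∑ i ∈ s, v i x) ≤ ∑ i ∈ s, luxNorm Ω q (v i) := by
    intro ι s
    induction s using Finset.cons_induction with
    | empty =>
      intro v hv
      simp only [Finset.sum_empty]
      exact le_of_eq (lux_zero hmeas hq1)
    | cons a s ha ih =>
      intro v hv
      simp only [Finset.sum_cons]
      calc luxNorm Ω q (fun x => v a x + ∑ i ∈ s, v i x)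
          ≤ luxNorm Ω q (v a) + luxNorm Ω q (fun x => ∑ i ∈ s, v i x) :=
            hadd _ _ (hv a) (continuous_finset_sum s fun i _ => hv i)
        _ ≤ luxNorm Ω q (v a) + ∑ i ∈ s, luxNorm Ω q (v i) :=
            add_le_add_right (ih v hv) _
  -- choice of local constant exponents and neighborhoods
  have hchoice : ∀ z ∈ K, ∃ a : ℝ, ∃ Vz : Set (Fin N → ℝ), IsOpen Vz ∧ z ∈ Vz ∧
      1 < a ∧ a < N ∧ ∀ y ∈ Vz ∩ K, a ≤ p y ∧ q y ≤ N * a / (N - a) := by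
    intro z hz
    have hpz1 : 1 < p z := hp1 z hz
    have hpzN : p z < N := hpN z hz
    obtain ⟨hqz1, hqzlt⟩ := hq z hz
    have hNpz : (0:ℝ) < N - p z := by linarith
    have hqzpos : (0:ℝ) < q z := by linarith
    have hLlt : N * q z / (N + q z) < p z := by
      rw [div_lt_iff₀ (by positivity)]
      rw [lt_div_iff₀ hNpz] at hqzlt
      nlinarith
    set a : ℝ := max ((N * q z / (N + q z) + p z)/2) ((1 + p z)/2) with hadef
    have ha_lt_pz : a < p z := by
      apply max_lt <;> [linarith; linarith]
    have ha1 : 1 < a := lt_of_lt_of_le (by linarith) (le_max_right _ _)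
    have haN : a < N := by linarith
    have haL : N * q z / (N + q z) < a := lt_of_lt_of_le (by linarith) (le_max_left _ _)
    have hqza : q z < N * a / (N - a) := by
      have hNa : (0:ℝ) < N - a := by linarith
      rw [lt_div_iff₀ hNa]
      rw [div_lt_iff₀ (by positivity)] at haL
      nlinarith
    have h1 : p ⁻¹' (Ioi a) ∈ nhdsWithin z K :=
      (hpc.continuousWithinAt hz) (Ioi_mem_nhds ha_lt_pz)
    have h2 : q ⁻¹' (Iio (N * a / (N - a))) ∈ nhdsWithin z K :=
      (hqc.continuousWithinAt hz) (Iio_mem_nhds hqza)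
    obtain ⟨Vz, hVo, hzV, hVsub⟩ := mem_nhdsWithin.1 (Filter.inter_mem h1 h2)
    exact ⟨a, Vz, hVo, hzV, ha1, haN, fun y hy => ⟨(hVsub hy).1.le, (hVsub hy).2.le⟩⟩
  choose! aF VF hVo hVmem haF1 haFN hFprop using hchoice
  have hcover : K ⊆ ⋃ z : K, VF z.1 := fun x hx => mem_iUnion.2 ⟨⟨x, hx⟩, hVmem x hx⟩
  obtain ⟨t, ht⟩ := hKc.elim_finite_subcover (fun z : K => VF z.1)
    (fun z => hVo z.1 z.2) hcover
  have hcovert : K ⊆ ⋃ i : ↥t, VF (i : ↥K).1 := by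
    intro x hx
    obtain ⟨i, hi, hxi⟩ := mem_iUnion₂.1 (ht hx)
    exact mem_iUnion.2 ⟨⟨i, hi⟩, hxi⟩
  -- smooth partition of unity
  obtain ⟨f, hfsub⟩ := SmoothPartitionOfUnity.exists_isSubordinate
    (I := 𝓘(ℝ, Fin N → ℝ)) isClosed_closure (fun i : ↥t => VF (i : ↥K).1)
    (fun i => hVo _ (i : ↥K).2) hcovert
  have hone : (1 : WithTop ℕ∞) ≤ ((⊤:ℕ∞) : WithTop ℕ∞) := by exact_mod_cast le_top
  have hφsm : ∀ i : ↥t, ContDiff ℝ (((⊤:ℕ∞)) : WithTop ℕ∞) (⇑(f i)) := fun i =>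
    contMDiff_iff_contDiff.1 (f i).contMDiff
  -- Sobolev constants
  have hSob : ∀ i : ↥t, ∃ C : ℝ, 0 ≤ C ∧ ∀ v : (Fin N → ℝ) → ℝ, ContDiff ℝ 1 v →
      HasCompactSupport v →
      (∫ x : Fin N → ℝ, |v x| ^ (N * aF (i:↥K).1 / (N - aF (i:↥K).1))) ^
          (N * aF (i:↥K).1 / (N - aF (i:↥K).1))⁻¹ ≤
        C * (∫ x : Fin N → ℝ, ‖fderiv ℝ v x‖ ^ aF (i:↥K).1) ^ (aF (i:↥K).1)⁻¹ :=
    fun i => sobolev_real hN (haF1 _ (i:↥K).2) (haFN _ (i:↥K).2) rfl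
  choose Cs hCs0 hCs using hSob
  -- bounds on gradients of the partition functions
  have hMbe : ∀ i : ↥t, ∃ M : ℝ, 0 ≤ M ∧ ∀ x ∈ Ω, ‖fderiv ℝ (⇑(f i)) x‖ ≤ M := by
    intro i
    obtain ⟨M, hM⟩ := hKc.exists_bound_of_continuousOn
      (((hφsm i).continuous_fderiv (by simp)).norm.continuousOn)
    refine ⟨max M 0, le_max_right _ _, fun x hx => ?_⟩
    have := hM x (hΩK hx)
    rw [Real.norm_eq_abs, abs_of_nonneg (norm_nonneg _)] at this
    exact le_trans this (le_max_left _ _)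
  choose Mb hMb0 hMbd using hMbe
  -- the constant
  set D : ↥t → ℝ := fun i => (V+1) * (Cs i * ((V+1) * (2 * (1 + Mb i)))) with hDdef
  have hD0 : ∀ i, 0 ≤ D i := fun i => by
    have := hCs0 i; have := hMb0 i
    positivity
  set C : ℝ := 1 + ∑ i : ↥t, D i with hCdef
  have hsD : 0 ≤ ∑ i : ↥t, D i := Finset.sum_nonneg fun i _ => hD0 i
  have hC1 : 1 ≤ C := by rw [hCdef]; linarith
  refine ⟨C, by linarith, fun u hu hu2 hsupp => ?_⟩
  have huc : Continuous u := hu.continuous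
  set g1 : (Fin N → ℝ) → ℝ := fun x => ‖fderiv ℝ u x‖ with hg1def
  have hg1c : Continuous g1 := (hu.continuous_fderiv (by simp)).norm
  set A : ℝ := luxNorm Ω p u with hAdef
  set B : ℝ := luxNorm Ω p g1 with hBdef
  have hA0 : 0 ≤ A := lux_nonneg _ _ _
  have hB0 : 0 ≤ B := lux_nonneg _ _ _
  have hkey : ∀ δ : ℝ, 0 < δ →
      luxNorm Ω q u ≤ (∑ i : ↥t, D i) * (A + B + 2*δ) + (t.card * (V+1)) * δ := by
    intro δ hδ
    set μ' : ℝ := A + δ with hμ'def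
    set μ : ℝ := B + δ with hμdef
    have hμ'lt : A < μ' := by rw [hμ'def]; linarith
    have hμlt : B < μ := by rw [hμdef]; linarith
    obtain ⟨hμ'pos, hmodu⟩ := aux_modular hmeas (hIp u huc) (hSp u huc) hp1Ω hμ'lt
    obtain ⟨hμpos, hmodd⟩ := aux_modular hmeas (hIp g1 hg1c) (hSp g1 hg1c) hp1Ω hμlt
    set vis : ↥t → (Fin N → ℝ) → ℝ := fun i y => u y * f i y with hvisdef
    have hvic : ∀ i, Continuous (vis i) := fun i => huc.mul (hφsm i).continuous
    have hueq : ∀ x ∈ Ω, u x = ∑ i : ↥t, vis i x := by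
      intro x hx
      have h1 := f.sum_eq_one (hΩK hx)
      rw [finsum_eq_sum_of_fintype] at h1
      simp only [hvisdef]
      rw [← Finset.mul_sum, h1, mul_one]
    have hper : ∀ i : ↥t, luxNorm Ω q (vis i) ≤ D i * (A + B + 2*δ) + (V+1) * δ := by
      intro i
      have h := per_piece hN hmeas hfin hg1def (hu.of_le (by simp)) hu2 hsupp hg1c
        ((hφsm i).of_le hone) (f.nonneg i) (fun x => f.le_one i x)
        (hVo _ (i:↥K).2) (hfsub i) (haF1 _ (i:↥K).2) (haFN _ (i:↥K).2)
        (fun y hy => hFprop _ (i:↥K).2 y ⟨hy.2, hΩK hy.1⟩) hq1 (hCs0 i) (hCs i)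
        (hMbd i) (hMb0 i) hμpos hμ'pos hmodu hmodd hIp hIC hδ
      calc luxNorm Ω q (vis i)
          ≤ (V+1) * (Cs i * ((2*(1+Mb i)*(μ + μ')) * (V+1)) + δ) := h
        _ = D i * (A + B + 2*δ) + (V+1) * δ := by
            simp only [hDdef]
            rw [hμdef, hμ'def]
            ring
    calc luxNorm Ω q u = luxNorm Ω q (fun x => ∑ i : ↥t, vis i x) := lux_congr hmeas hueq
      _ ≤ ∑ i : ↥t, luxNorm Ω q (vis i) := hsumlem Finset.univ vis hvic
      _ ≤ ∑ i : ↥t, (D i * (A + B + 2*δ) + (V+1) * δ) := Finset.sum_le_sum fun i _ => hper i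
      _ = (∑ i : ↥t, D i) * (A + B + 2*δ) + (t.card * (V+1)) * δ := by
          rw [Finset.sum_add_distrib, ← Finset.sum_mul, Finset.sum_const, Finset.card_univ,
            Fintype.card_coe, nsmul_eq_mul]
          ring
  apply le_of_forall_pos_le_add
  intro ε hε
  set D0 : ℝ := 2*(∑ i : ↥t, D i) + (t.card * (V+1)) + 1 with hD0def
  have hD0pos : 0 < D0 := by
    have : (0:ℝ) ≤ (t.card : ℝ) * (V+1) := by positivity
    rw [hD0def]; linarith
  have hδpos : 0 < ε / D0 := div_pos hε hD0pos
  calc luxNorm Ω q u ≤ (∑ i : ↥t, D i) * (A + B + 2*(ε/D0)) + (t.card * (V+1)) * (ε/D0) :=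
        hkey _ hδpos
    _ = (∑ i : ↥t, D i) * (A + B) + (2*(∑ i : ↥t, D i) + (t.card * (V+1))) * (ε/D0) := by ring
    _ ≤ C * (A + B) + ε := by
        have h1 : (∑ i : ↥t, D i) * (A + B) ≤ C * (A+B) := by
          apply mul_le_mul_of_nonneg_right _ (by linarith)
          rw [hCdef]; linarith
        have h2 : (2*(∑ i : ↥t, D i) + (t.card * (V+1))) * (ε/D0) ≤ ε := by
          have hle : (2*(∑ i : ↥t, D i) + ((t.card:ℝ) * (V+1))) ≤ D0 := by rw [hD0def]; linarith
          calc (2*(∑ i : ↥t, D i) + ((t.card:ℝ) * (V+1))) * (ε/D0) ≤ D0 * (ε/D0) :=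
                mul_le_mul_of_nonneg_right hle (div_pos hε hD0pos).le
            _ = ε := by rw [mul_comm, div_mul_cancel₀ _ hD0pos.ne']
        linarith
end

section
/- Let Ω ⊆ ℝ^N be a bounded open set with Lebesgue measure and p : Ω → ℝ measurable with 1 < p⁻ := inf_Ω p ≤ p⁺ := sup_Ω p < ∞. Let (u_n) and u be measurable real-valued functions on Ω with ∫_Ω |u(x)|^{p(x)} dx < ∞ and ∫_Ω |u_n(x) − u(x)|^{p(x)} dx → 0 as n → ∞. Then ∫_Ω | |u_n(x)|^{p(x)−2} u_n(x) − |u(x)|^{p(x)−2} u(x) |^{p(x)/(p(x)−1)} dx → 0 as n → ∞; that is, the map u ↦ |u|^{p(x)−2}u is continuous from L^{p(x)}(Ω) to L^{p(x)/(p(x)−1)}(Ω) in the sense of modular convergence. -/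
/-!
Write `φ_q(a) = |a|^(q-2) a` and `q' = q/(q-1)`, so that `|φ_q(a)|^q' = |a|^q`. For every
`ε > 0` there is `C` with `|φ_q(a) - φ_q(b)|^q' ≤ C |a - b|^q + ε |b|^q` for all `q ∈ [p⁻, p⁺]`:
if `|a - b| ≥ δ |b|`, both `|a|` and `|b|` are `O(|a - b|)`; if `|a - b| < δ |b|`, then `a` and
`b` have the same sign and, after factoring out `|b|^(q-1)`, the bound is the continuity of
`t ↦ t^(p⁺-1)` at `t = 1`. Integrating with `a = u_n(x)`, `b = u(x)` gives
`∫ |φ(u_n) - φ(u)|^p' ≤ C ∫ |u_n - u|^p + ε ∫ |u|^p`.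
-/

open MeasureTheory Real Set Filter Topology

noncomputable def oddPow (r x : ℝ) : ℝ := |x| ^ (r - 2) * x

lemma abs_add_rpow_le_two_rpow_mul {e : ℝ} (he : 0 ≤ e) (x y : ℝ) :
    |x + y| ^ e ≤ 2 ^ e * (|x| ^ e + |y| ^ e) := calc
  |x + y| ^ e ≤ (2 * max |x| |y|) ^ e := by
    gcongr
    exact (abs_add_le x y).trans (by rw [two_mul]; gcongr <;> simp)
  _ = 2 ^ e * max (|x| ^ e) (|y| ^ e) := by
    rw [mul_rpow zero_le_two (by positivity)]
    rcases le_total |x| |y| with h | h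
    · rw [max_eq_right h, max_eq_right (by gcongr)]
    · rw [max_eq_left h, max_eq_left (by gcongr)]
  _ ≤ 2 ^ e * (|x| ^ e + |y| ^ e) := by
    gcongr
    exact max_le_add_of_nonneg (by positivity) (by positivity)

lemma abs_sub_rpow_le_two_rpow_mul {e : ℝ} (he : 0 ≤ e) (x y : ℝ) :
    |x - y| ^ e ≤ 2 ^ e * (|x| ^ e + |y| ^ e) := by
  simpa [sub_eq_add_neg] using abs_add_rpow_le_two_rpow_mul he x (-y)

lemma abs_rpow_sub_one_le_of_le {t s S : ℝ} (ht : 0 ≤ t) (hs : 0 ≤ s) (hsS : s ≤ S) :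
    |t ^ s - 1| ≤ |t ^ S - 1| := by
  rcases le_total 1 t with h | h
  · have h₁ : 1 ≤ t ^ s := one_le_rpow h hs
    have h₂ : t ^ s ≤ t ^ S := rpow_le_rpow_of_exponent_le h hsS
    rw [abs_of_nonneg (by linarith), abs_of_nonneg (by linarith)]
    linarith
  · have h₁ : t ^ s ≤ 1 := rpow_le_one ht h hs
    have h₂ : t ^ S ≤ t ^ s := rpow_le_rpow_of_exponent_ge' ht h hs hsS
    rw [abs_of_nonpos (by linarith), abs_of_nonpos (by linarith)]
    linarith

lemma div_sub_one_le_div_sub_one {a b : ℝ} (ha : 1 < a) (hab : a ≤ b) :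
    b / (b - 1) ≤ a / (a - 1) := by
  rw [div_le_div_iff₀ (by linarith) (by linarith)]
  nlinarith

lemma one_le_div_sub_one {a : ℝ} (ha : 1 < a) : 1 ≤ a / (a - 1) := by
  rw [le_div_iff₀ (by linarith)]
  linarith

namespace oddPow

variable {r P₀ : ℝ}

lemma neg (r x : ℝ) : oddPow r (-x) = -oddPow r x := by
  simp [oddPow]

lemma of_pos (r : ℝ) {x : ℝ} (hx : 0 < x) : oddPow r x = x ^ (r - 1) := by
  rw [oddPow, abs_of_pos hx, ← rpow_add_one hx.ne']
  ring_nf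

lemma abs_eq (hr : 1 < r) (x : ℝ) : |oddPow r x| = |x| ^ (r - 1) := by
  rcases eq_or_ne x 0 with rfl | hx
  · simp [oddPow, zero_rpow (sub_ne_zero.2 hr.ne')]
  · rw [← of_pos r (abs_pos.2 hx), oddPow, oddPow, abs_mul, abs_abs,
      abs_of_nonneg (by positivity)]

lemma abs_rpow_conj (hr : 1 < r) (x : ℝ) : |oddPow r x| ^ (r / (r - 1)) = |x| ^ r := by
  rw [abs_eq hr, ← rpow_mul (abs_nonneg x), mul_div_cancel₀ _ (sub_ne_zero.2 hr.ne')]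

lemma abs_sub_rpow_le (hr : 1 < r) (a b : ℝ) :
    |a - b| ^ r ≤ 2 ^ r * (2 ^ (r / (r - 1)) + 1) *
      (|oddPow r a - oddPow r b| ^ (r / (r - 1)) + |b| ^ r) := by
  have hr' : 0 ≤ r / (r - 1) := div_nonneg (by linarith) (by linarith)
  have ha : |a| ^ r ≤ 2 ^ (r / (r - 1)) *
      (|oddPow r a - oddPow r b| ^ (r / (r - 1)) + |b| ^ r) := calc
    |a| ^ r = |(oddPow r a - oddPow r b) + oddPow r b| ^ (r / (r - 1)) := by
      rw [sub_add_cancel, abs_rpow_conj hr]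
    _ ≤ _ := by
      rw [← abs_rpow_conj hr b]
      exact abs_add_rpow_le_two_rpow_mul hr' _ _
  have hG : 0 ≤ |oddPow r a - oddPow r b| ^ (r / (r - 1)) := by positivity
  calc |a - b| ^ r ≤ 2 ^ r * (|a| ^ r + |b| ^ r) :=
        abs_sub_rpow_le_two_rpow_mul (by linarith) a b
    _ ≤ 2 ^ r * (2 ^ (r / (r - 1)) * (|oddPow r a - oddPow r b| ^ (r / (r - 1)) + |b| ^ r)
          + |b| ^ r) := by gcongr
    _ ≤ _ := by
      rw [mul_assoc]
      gcongr
      linarith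

lemma abs_sub_rpow_conj_le_of_le_mul (hr : 1 < r) {a b M : ℝ} (hM : 0 ≤ M) (ha : |a| ≤ M * |a - b|)
    (hb : |b| ≤ M * |a - b|) :
    |oddPow r a - oddPow r b| ^ (r / (r - 1)) ≤ 2 ^ (r / (r - 1)) * (2 * M ^ r) * |a - b| ^ r := by
  have hpow {x : ℝ} (hx : |x| ≤ M * |a - b|) : |x| ^ r ≤ M ^ r * |a - b| ^ r := by
    rw [← mul_rpow hM (abs_nonneg _)]
    gcongr
  calc |oddPow r a - oddPow r b| ^ (r / (r - 1))
      ≤ 2 ^ (r / (r - 1)) * (|a| ^ r + |b| ^ r) := by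
        rw [← abs_rpow_conj hr a, ← abs_rpow_conj hr b]
        exact abs_sub_rpow_le_two_rpow_mul (div_nonneg (by linarith) (by linarith)) _ _
    _ ≤ 2 ^ (r / (r - 1)) * (M ^ r * |a - b| ^ r + M ^ r * |a - b| ^ r) := by
        gcongr <;> exact hpow ‹_›
    _ = _ := by ring

lemma abs_sub_le_of_abs_sub_lt_mul {a b δ η S : ℝ} (hr : 1 < r) (hS : r - 1 ≤ S) (hδ : δ ≤ 1)
    (hη : ∀ t, |t - 1| < δ → |t ^ S - 1| ≤ η) (hab : |a - b| < δ * |b|) :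
    |oddPow r a - oddPow r b| ≤ η * |b| ^ (r - 1) := by
  wlog hb : 0 < b generalizing a b
  · have hb0 : b ≠ 0 := by
      rintro rfl
      simp only [abs_zero, mul_zero] at hab
      exact (abs_nonneg _).not_gt hab
    have := this (a := -a) (b := -b) (by rwa [← neg_add', abs_neg, abs_neg])
      (neg_pos.2 (lt_of_le_of_ne (not_lt.1 hb) hb0))
    rwa [oddPow.neg, oddPow.neg, neg_sub_neg, abs_sub_comm, abs_neg] at this
  rw [abs_of_pos hb] at hab ⊢
  have ha : 0 < a := by
    nlinarith [(abs_lt.1 hab).1, mul_le_mul_of_nonneg_right hδ hb.le]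
  have hab' : |a / b - 1| < δ := by
    rwa [div_sub_one hb.ne', abs_div, abs_of_pos hb, div_lt_iff₀ hb]
  have hfactor : a ^ (r - 1) - b ^ (r - 1) = b ^ (r - 1) * ((a / b) ^ (r - 1) - 1) := by
    rw [div_rpow ha.le hb.le]
    field_simp
  calc |oddPow r a - oddPow r b| = b ^ (r - 1) * |(a / b) ^ (r - 1) - 1| := by
        rw [of_pos r ha, of_pos r hb, hfactor, abs_mul, abs_of_pos (by positivity)]
    _ ≤ b ^ (r - 1) * |(a / b) ^ S - 1| :=
        mul_le_mul_of_nonneg_left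
          (abs_rpow_sub_one_le_of_le (by positivity) (by linarith) hS) (by positivity)
    _ ≤ η * b ^ (r - 1) := by
        rw [mul_comm]
        gcongr
        exact hη _ hab'

lemma exists_abs_sub_rpow_le (hP₀ : 1 < P₀) (P₁ : ℝ) :
    ∃ D, ∀ q ∈ Icc P₀ P₁, ∀ a b : ℝ, |a - b| ^ q ≤
      D * (|oddPow q a - oddPow q b| ^ (q / (q - 1)) + |b| ^ q) := by
  refine ⟨2 ^ P₁ * (2 ^ (P₀ / (P₀ - 1)) + 1), fun q ⟨hq₀, hq₁⟩ a b => ?_⟩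
  have hq : 1 < q := hP₀.trans_le hq₀
  refine (abs_sub_rpow_le hq a b).trans ?_
  gcongr 2 ^ ?_ * (2 ^ ?_ + 1) * _
  · exact one_le_two
  · exact one_le_two
  · exact div_sub_one_le_div_sub_one hP₀ hq₀

lemma exists_abs_sub_rpow_conj_le (hP₀ : 1 < P₀) (P₁ : ℝ) {ε : ℝ} (hε : 0 < ε) :
    ∃ C, ∀ q ∈ Icc P₀ P₁, ∀ a b : ℝ,
      |oddPow q a - oddPow q b| ^ (q / (q - 1)) ≤ C * |a - b| ^ q + ε * |b| ^ q := by
  obtain ⟨δ, hδ, hη⟩ := Metric.continuousAt_iff.1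
    (continuousAt_rpow_const 1 (P₁ - 1) (Or.inl one_ne_zero)) (min ε 1) (by positivity)
  simp only [one_rpow, Real.dist_eq] at hη
  set δ' := min δ 1
  have hδ' : 0 < δ' := lt_min hδ one_pos
  set M := 1 + δ'⁻¹
  refine ⟨2 ^ (P₀ / (P₀ - 1)) * (2 * M ^ P₁), fun q ⟨hq₀, hq₁⟩ a b => ?_⟩
  have hq : 1 < q := hP₀.trans_le hq₀
  rcases lt_or_ge |a - b| (δ' * |b|) with hnear | hfar
  · have hdiff := abs_sub_le_of_abs_sub_lt_mul hq (by linarith) (min_le_right _ _)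
      (fun t ht => (hη (ht.trans_le (min_le_left _ _))).le) hnear
    calc |oddPow q a - oddPow q b| ^ (q / (q - 1))
        ≤ (min ε 1 * |b| ^ (q - 1)) ^ (q / (q - 1)) := by gcongr
      _ = min ε 1 ^ (q / (q - 1)) * |b| ^ q := by
        rw [mul_rpow (by positivity) (by positivity), ← rpow_mul (abs_nonneg b),
          mul_div_cancel₀ _ (sub_ne_zero.2 hq.ne')]
      _ ≤ min ε 1 * |b| ^ q := by
        gcongr
        exact rpow_le_self_of_le_one (by positivity) (min_le_right _ _) (one_le_div_sub_one hq)
      _ ≤ ε * |b| ^ q := by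
        gcongr
        exact min_le_left _ _
      _ ≤ _ := le_add_of_nonneg_left (by positivity)
  · have hb' : |b| ≤ δ'⁻¹ * |a - b| := by
      rw [← div_eq_inv_mul, le_div_iff₀ hδ', mul_comm]
      exact hfar
    have hb : |b| ≤ M * |a - b| := by
      nlinarith [abs_nonneg (a - b)]
    have ha : |a| ≤ M * |a - b| := by
      have := abs_add_le (a - b) b
      rw [sub_add_cancel] at this
      linarith
    calc |oddPow q a - oddPow q b| ^ (q / (q - 1))
        ≤ 2 ^ (q / (q - 1)) * (2 * M ^ q) * |a - b| ^ q :=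
          abs_sub_rpow_conj_le_of_le_mul hq (by positivity) ha hb
      _ ≤ 2 ^ (P₀ / (P₀ - 1)) * (2 * M ^ P₁) * |a - b| ^ q := by
        gcongr 2 ^ ?_ * (2 * ?_ ^ ?_) * _
        · exact one_le_two
        · exact div_sub_one_le_div_sub_one hP₀ hq₀
        · exact le_add_of_nonneg_right (by positivity)
      _ ≤ _ := le_add_of_nonneg_right (by positivity)

end oddPow

lemma integral_le_mul_add_of_ae_le {α : Type*} [MeasurableSpace α] {μ : Measure α}
    {f g w : α → ℝ} {C ε D : ℝ} (hε : 0 ≤ ε) (hf₀ : 0 ≤ᵐ[μ] f) (hg₀ : 0 ≤ᵐ[μ] g)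
    (hw₀ : 0 ≤ᵐ[μ] w) (hfm : AEStronglyMeasurable f μ) (hgm : AEStronglyMeasurable g μ)
    (hw : Integrable w μ) (hfg : ∀ᵐ x ∂μ, f x ≤ C * g x + ε * w x)
    (hgf : ∀ᵐ x ∂μ, g x ≤ D * (f x + w x)) :
    ∫ x, f x ∂μ ≤ C * ∫ x, g x ∂μ + ε * ∫ x, w x ∂μ := by
  -- `hgf` makes `f` non-integrable whenever `g` is, and then both integrals are junk zeros.
  by_cases hg : Integrable g μ
  · have hbound : Integrable (fun x => C * g x + ε * w x) μ :=
      (hg.const_mul C).add (hw.const_mul ε)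
    have hf : Integrable f μ := hbound.mono' hfm <| by
      filter_upwards [hf₀, hfg] with x h₀ h
      rwa [Real.norm_of_nonneg h₀]
    calc ∫ x, f x ∂μ ≤ ∫ x, C * g x + ε * w x ∂μ := integral_mono_ae hf hbound hfg
      _ = _ := by
        rw [integral_add (hg.const_mul C) (hw.const_mul ε), integral_const_mul,
          integral_const_mul]
  · have hf : ¬Integrable f μ := fun hf => hg <| ((hf.add hw).const_mul D).mono' hgm <| by
      filter_upwards [hg₀, hgf] with x h₀ h
      rwa [Real.norm_of_nonneg h₀]
    rw [integral_undef hf, integral_undef hg, mul_zero, zero_add]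
    exact mul_nonneg hε (integral_nonneg_of_ae hw₀)

lemma tendsto_zero_of_forall_le_mul_add {ι : Type*} {l : Filter ι} {f g : ι → ℝ} {W : ℝ}
    (hf₀ : ∀ i, 0 ≤ f i) (hg : Tendsto g l (𝓝 0)) (hW : 0 ≤ W)
    (H : ∀ ε > 0, ∃ C, ∀ i, f i ≤ C * g i + ε * W) : Tendsto f l (𝓝 0) := by
  refine tendsto_order.2 ⟨fun a ha => .of_forall fun i => ha.trans_le (hf₀ i), fun a ha => ?_⟩
  have hε : 0 < a / (2 * (W + 1)) := by positivity
  obtain ⟨C, hC⟩ := H _ hε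
  have hεW : a / (2 * (W + 1)) * W < a / 2 := by
    rw [div_mul_eq_mul_div, div_lt_div_iff₀ (by positivity) two_pos]
    nlinarith
  have hCg : Tendsto (fun i => C * g i) l (𝓝 0) := by simpa using hg.const_mul C
  filter_upwards [hCg.eventually_lt_const (half_pos ha)] with i hi
  linarith [hC i]

theorem power_map_modular_continuous_general {N : ℕ}
    (Ω : Set (Fin N → ℝ)) (hΩo : IsOpen Ω)
    (p : (Fin N → ℝ) → ℝ) (hp : Measurable p)
    (hpm : 1 < sInf (p '' Ω)) (hpM : BddAbove (p '' Ω))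
    (un : ℕ → (Fin N → ℝ) → ℝ) (u : (Fin N → ℝ) → ℝ)
    (hun : ∀ n, Measurable (un n)) (hu : Measurable u)
    (hufin : IntegrableOn (fun x => |u x| ^ (p x)) Ω)
    (hconv : Tendsto (fun n => ∫ x in Ω, |un n x - u x| ^ (p x)) atTop (nhds 0)) :
    Tendsto
      (fun n => ∫ x in Ω,
        |(|un n x| ^ (p x - 2) * un n x - |u x| ^ (p x - 2) * u x)| ^ (p x / (p x - 1)))
      atTop (nhds 0) := by
  have hΩ : MeasurableSet Ω := hΩo.measurableSet
  have hpBdd : BddBelow (p '' Ω) := by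
    by_contra h
    rw [Real.sInf_of_not_bddBelow h] at hpm
    exact absurd hpm (by norm_num)
  have hpΩ : ∀ x ∈ Ω, p x ∈ Icc (sInf (p '' Ω)) (sSup (p '' Ω)) := fun x hx =>
    ⟨csInf_le hpBdd (mem_image_of_mem p hx), le_csSup hpM (mem_image_of_mem p hx)⟩
  obtain ⟨D, hD⟩ := oddPow.exists_abs_sub_rpow_le hpm (sSup (p '' Ω))
  refine tendsto_zero_of_forall_le_mul_add (W := ∫ x in Ω, |u x| ^ (p x))
    (fun n => integral_nonneg fun x => by positivity) hconv
    (integral_nonneg fun x => by positivity) fun ε hε => ?_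
  obtain ⟨C, hC⟩ := oddPow.exists_abs_sub_rpow_conj_le hpm (sSup (p '' Ω)) hε
  refine ⟨C, fun n => integral_le_mul_add_of_ae_le (D := D) hε.le
    (.of_forall fun x => by positivity) (.of_forall fun x => by positivity)
    (.of_forall fun x => by positivity) (Measurable.aestronglyMeasurable (by fun_prop))
    (Measurable.aestronglyMeasurable (by fun_prop)) hufin ?_ ?_⟩
  · exact ae_restrict_of_forall_mem hΩ fun x hx => hC _ (hpΩ x hx) _ _
  · exact ae_restrict_of_forall_mem hΩ fun x hx => hD _ (hpΩ x hx) _ _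

/-- modular continuity of the odd power map
`u ↦ |u|^{p(x)-2} u` from `L^{p(x)}` to `L^{p(x)/(p(x)-1)}`. -/
theorem power_map_modular_continuous {N : ℕ}
    (Ω : Set (Fin N → ℝ)) (hΩo : IsOpen Ω) (hΩb : Bornology.IsBounded Ω)
    (p : (Fin N → ℝ) → ℝ) (hp : Measurable p)
    (hpm : 1 < sInf (p '' Ω)) (hpM : BddAbove (p '' Ω))
    (un : ℕ → (Fin N → ℝ) → ℝ) (u : (Fin N → ℝ) → ℝ)
    (hun : ∀ n, Measurable (un n)) (hu : Measurable u)
    (hufin : IntegrableOn (fun x => |u x| ^ (p x)) Ω)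
    (hconv : Tendsto (fun n => ∫ x in Ω, |un n x - u x| ^ (p x)) atTop (nhds 0)) :
    Tendsto
      (fun n => ∫ x in Ω,
        |(|un n x| ^ (p x - 2) * un n x - |u x| ^ (p x - 2) * u x)| ^ (p x / (p x - 1)))
      atTop (nhds 0) :=
  power_map_modular_continuous_general Ω hΩo p hp hpm hpM un u hun hu hufin hconv
end
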